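/- Let P, Q ∈ ℝ^{n×n} be symmetric positive definite. Let U ∈ ℝ^{n×n} be an invertible matrix with P = U Uᵀ, and let Uᵀ Q U = V Λ² Vᵀ be a spectral decomposition with V orthogonal and Λ diagonal with strictly positive diagonal entries. Define S = Λ^{1/2} Vᵀ U^{−1}. Then S is invertible, S P Sᵀ = Λ, and (S^{−1})ᵀ Q S^{−1} = Λ; that is, the state-space transformation S simultaneously makes the two Gramians equal and diagonal. -/

import Mathlib

/-! Since `V` is orthogonal, `S = Λ^{1/2} Vᵀ U⁻¹` has the explicit inverse `U V Λ^{-1/2}`.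
Substituting `P = U Uᵀ` gives `S P Sᵀ = Λ^{1/2} (Vᵀ V) Λ^{1/2} = Λ`, and substituting the spectral
decomposition of `Uᵀ Q U` gives `(S⁻¹)ᵀ Q S⁻¹ = Λ^{-1/2} (Vᵀ V) Λ² (Vᵀ V) Λ^{-1/2} = Λ`. -/

open Matrix

namespace Matrix

variable {m R : Type*} [Fintype m] [DecidableEq m] [CommRing R]

theorem inv_mul_transpose_mul_inv {D U V : Matrix m m R} (hD : IsUnit D.det)
    (hU : IsUnit U.det) (hV : Vᵀ * V = 1) : (D * Vᵀ * U⁻¹)⁻¹ = U * V * D⁻¹ := by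
  apply inv_eq_right_inv
  calc D * Vᵀ * U⁻¹ * (U * V * D⁻¹) = D * (Vᵀ * (U⁻¹ * U) * V) * D⁻¹ := by
        simp only [Matrix.mul_assoc]
    _ = 1 := by rw [nonsing_inv_mul _ hU, Matrix.mul_one, hV, Matrix.mul_one, mul_nonsing_inv _ hD]

theorem isUnit_det_mul_transpose_mul_inv {D U V : Matrix m m R} (hD : IsUnit D.det)
    (hU : IsUnit U.det) (hV : Vᵀ * V = 1) : IsUnit (D * Vᵀ * U⁻¹).det := by
  have hVt : IsUnit Vᵀ.det := isUnit_det_of_right_inverse hV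
  simpa only [det_mul] using (hD.mul hVt).mul (isUnit_nonsing_inv_det U hU)

theorem conj_mul_transpose_eq_mul_transpose {D U V : Matrix m m R}
    (hU : IsUnit U.det) (hV : Vᵀ * V = 1) :
    D * Vᵀ * U⁻¹ * (U * Uᵀ) * (D * Vᵀ * U⁻¹)ᵀ = D * Dᵀ := by
  calc D * Vᵀ * U⁻¹ * (U * Uᵀ) * (D * Vᵀ * U⁻¹)ᵀ
        = D * (Vᵀ * (U⁻¹ * U) * (Uᵀ * Uᵀ⁻¹) * V) * Dᵀ := by
          simp only [transpose_mul, transpose_transpose, transpose_nonsing_inv, Matrix.mul_assoc]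
    _ = D * Dᵀ := by
          rw [nonsing_inv_mul _ hU, mul_nonsing_inv _ (isUnit_det_transpose _ hU),
            Matrix.mul_one, Matrix.mul_one, hV, Matrix.mul_one]

theorem inv_transpose_conj_eq_of_mul_mul_eq {D U V Q M : Matrix m m R} (hD : IsUnit D.det)
    (hU : IsUnit U.det) (hV : Vᵀ * V = 1) (hQ : Uᵀ * Q * U = V * M * Vᵀ) :
    ((D * Vᵀ * U⁻¹)⁻¹)ᵀ * Q * (D * Vᵀ * U⁻¹)⁻¹ = D⁻¹ᵀ * M * D⁻¹ := by
  rw [inv_mul_transpose_mul_inv hD hU hV]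
  calc (U * V * D⁻¹)ᵀ * Q * (U * V * D⁻¹) = D⁻¹ᵀ * (Vᵀ * (Uᵀ * Q * U) * V) * D⁻¹ := by
        simp only [transpose_mul, Matrix.mul_assoc]
    _ = D⁻¹ᵀ * M * D⁻¹ := by
        rw [hQ]
        simp only [← Matrix.mul_assoc, hV, Matrix.one_mul]
        simp only [Matrix.mul_assoc, hV, Matrix.mul_one]

end Matrix

theorem Real.inv_sqrt_mul_sq_mul_inv_sqrt {x : ℝ} (hx : 0 < x) : (√x)⁻¹ * x ^ 2 * (√x)⁻¹ = x := by
  have hsq := Real.sq_sqrt hx.le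
  have hne : √x ≠ 0 := (Real.sqrt_pos.2 hx).ne'
  field_simp
  nlinarith

namespace Matrix

variable {m : Type*} [Fintype m] [DecidableEq m] {d : m → ℝ}

theorem diagonal_sqrt_mul_transpose (hd : ∀ i, 0 ≤ d i) :
    diagonal (fun i => √(d i)) * (diagonal fun i => √(d i))ᵀ = diagonal d := by
  rw [diagonal_transpose, diagonal_mul_diagonal]
  exact congrArg diagonal (funext fun i => Real.mul_self_sqrt (hd i))

theorem isUnit_det_diagonal_sqrt (hd : ∀ i, 0 < d i) : IsUnit (diagonal fun i => √(d i)).det := by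
  rw [det_diagonal]
  exact (Finset.prod_pos fun i _ => Real.sqrt_pos.2 (hd i)).ne'.isUnit

theorem inv_diagonal_sqrt (hd : ∀ i, 0 < d i) :
    (diagonal fun i => √(d i))⁻¹ = diagonal fun i => (√(d i))⁻¹ := by
  refine inv_eq_left_inv ?_
  rw [diagonal_mul_diagonal, ← diagonal_one]
  exact congrArg diagonal (funext fun i => inv_mul_cancel₀ (Real.sqrt_pos.2 (hd i)).ne')

theorem inv_diagonal_sqrt_transpose_mul_sq_mul (hd : ∀ i, 0 < d i) :
    (diagonal fun i => √(d i))⁻¹ᵀ * diagonal d ^ 2 * (diagonal fun i => √(d i))⁻¹ = diagonal d := by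
  rw [inv_diagonal_sqrt hd, diagonal_transpose, diagonal_pow, diagonal_mul_diagonal,
    diagonal_mul_diagonal]
  exact congrArg diagonal (funext fun i => Real.inv_sqrt_mul_sq_mul_inv_sqrt (hd i))

end Matrix

theorem stmt_15 {n : ℕ} (P Q U V : Matrix (Fin n) (Fin n) ℝ)
    (hU : IsUnit U.det) (hPU : P = U * Uᵀ)
    (hV : Vᵀ * V = 1)
    (d : Fin n → ℝ) (hd : ∀ i, 0 < d i)
    (hspec : Uᵀ * Q * U = V * (Matrix.diagonal d) ^ 2 * Vᵀ) :
    IsUnit (Matrix.diagonal (fun i => Real.sqrt (d i)) * Vᵀ * U⁻¹).det ∧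
    (Matrix.diagonal (fun i => Real.sqrt (d i)) * Vᵀ * U⁻¹) * P *
        (Matrix.diagonal (fun i => Real.sqrt (d i)) * Vᵀ * U⁻¹)ᵀ = Matrix.diagonal d ∧
    ((Matrix.diagonal (fun i => Real.sqrt (d i)) * Vᵀ * U⁻¹)⁻¹)ᵀ * Q *
        (Matrix.diagonal (fun i => Real.sqrt (d i)) * Vᵀ * U⁻¹)⁻¹ = Matrix.diagonal d := by
  have hD := isUnit_det_diagonal_sqrt hd
  subst hPU
  refine ⟨isUnit_det_mul_transpose_mul_inv hD hU hV, ?_, ?_⟩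
  · rw [conj_mul_transpose_eq_mul_transpose hU hV,
      diagonal_sqrt_mul_transpose fun i => (hd i).le]
  · rw [inv_transpose_conj_eq_of_mul_mul_eq hD hU hV hspec,
      inv_diagonal_sqrt_transpose_mul_sq_mul hd]
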